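/- arXiv:math/0508280 — 2 statements merged into one kernel-verified Lean document; each statement's English description precedes it below -/
import Mathlib

section
/- The map F sending the PGL(m)-orbit of a configuration (p₁, ..., p_k) ∈ G(k,m) to the tuple (p_{m+3}^π, ..., p_k^π) of projective coordinates with respect to the frame π = (p₁, ..., p_{m+2}) is a well-defined bijection from the projective shape space PΣ_m^k = G(k,m)/PGL(m) onto (ℝP^m)^{k−m−2}. -/
open Projectivization

def IsProjFrame {m : ℕ} (p : Fin (m + 2) → Projectivization ℝ (Fin (m + 1) → ℝ)) : Prop :=
  ∀ j : Fin (m + 2),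
    LinearIndependent ℝ (fun i : {i : Fin (m + 2) // i ≠ j} => (p i.1).rep)

noncomputable def projMap {m : ℕ} (g : (Fin (m + 1) → ℝ) ≃ₗ[ℝ] (Fin (m + 1) → ℝ)) :
    Projectivization ℝ (Fin (m + 1) → ℝ) → Projectivization ℝ (Fin (m + 1) → ℝ) :=
  Projectivization.map g.toLinearMap g.injective

lemma single_ne_zero' {m : ℕ} (j : Fin (m + 1)) :
    (Pi.single j 1 : Fin (m + 1) → ℝ) ≠ 0 := by
  intro h; have := congrFun h j; simp at this

lemma ones_ne_zero' {m : ℕ} : (fun _ => (1 : ℝ) : Fin (m + 1) → ℝ) ≠ 0 := by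
  intro h; have := congrFun h 0; simp at this

/-- The standard projective frame `([e₁], …, [e_{m+1}], [e₁+⋯+e_{m+1}])`. -/
noncomputable def stdFrame (m : ℕ) : Fin (m + 2) → Projectivization ℝ (Fin (m + 1) → ℝ) :=
  Fin.snoc (fun j : Fin (m + 1) => Projectivization.mk ℝ (Pi.single j 1) (single_ne_zero' j))
    (Projectivization.mk ℝ (fun _ => (1 : ℝ)) ones_ne_zero')

-- helpers
def stdVec (m : ℕ) : Fin (m + 2) → (Fin (m + 1) → ℝ) :=
  Fin.snoc (fun j => Pi.single j 1) (fun _ => (1 : ℝ))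

lemma stdVec_ne_zero {m : ℕ} (j : Fin (m + 2)) : stdVec m j ≠ 0 := by
  induction j using Fin.lastCases with
  | last => simpa [stdVec] using ones_ne_zero' (m := m)
  | cast i => simpa [stdVec] using single_ne_zero' i

lemma stdFrame_eq {m : ℕ} (j : Fin (m + 2)) :
    stdFrame m j = Projectivization.mk ℝ (stdVec m j) (stdVec_ne_zero j) := by
  induction j using Fin.lastCases with
  | last => simp [stdFrame, stdVec]
  | cast i => simp [stdFrame, stdVec]

lemma projMap_mk {m : ℕ} (g : (Fin (m + 1) → ℝ) ≃ₗ[ℝ] (Fin (m + 1) → ℝ))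
    (v : Fin (m + 1) → ℝ) (hv : v ≠ 0) :
    projMap g (Projectivization.mk ℝ v hv) =
      Projectivization.mk ℝ (g v) (by simp [hv]) := rfl

lemma projMap_symm_apply {m : ℕ} (g : (Fin (m + 1) → ℝ) ≃ₗ[ℝ] (Fin (m + 1) → ℝ))
    (x : Projectivization ℝ (Fin (m + 1) → ℝ)) :
    projMap g (projMap g.symm x) = x := by
  induction x using Projectivization.ind with
  | h v hv => rw [projMap_mk, projMap_mk]; simp

lemma projMap_apply_symm {m : ℕ} (g : (Fin (m + 1) → ℝ) ≃ₗ[ℝ] (Fin (m + 1) → ℝ))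
    (x : Projectivization ℝ (Fin (m + 1) → ℝ)) :
    projMap g.symm (projMap g x) = x := by
  induction x using Projectivization.ind with
  | h v hv => rw [projMap_mk, projMap_mk]; simp

lemma projMap_trans {m : ℕ} (g h : (Fin (m + 1) → ℝ) ≃ₗ[ℝ] (Fin (m + 1) → ℝ))
    (x : Projectivization ℝ (Fin (m + 1) → ℝ)) :
    projMap (g.trans h) x = projMap h (projMap g x) := by
  induction x using Projectivization.ind with
  | h v hv => rw [projMap_mk, projMap_mk, projMap_mk]; rfl

lemma projMap_refl {m : ℕ} (x : Projectivization ℝ (Fin (m + 1) → ℝ)) :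
    projMap (LinearEquiv.refl ℝ (Fin (m + 1) → ℝ)) x = x := by
  induction x using Projectivization.ind with
  | h v hv => rfl

lemma sum_stdVec_apply {m : ℕ} (G : Fin (m + 2) → ℝ) (c : Fin (m + 1)) :
    (∑ i, G i • stdVec m i) c = G c.castSucc + G (Fin.last (m + 1)) := by
  rw [Fin.sum_univ_castSucc]
  simp only [stdVec, Fin.snoc_castSucc, Fin.snoc_last, Pi.add_apply, Finset.sum_apply,
    Pi.smul_apply, smul_eq_mul, Pi.single_apply, mul_ite, mul_one, mul_zero]
  rw [Finset.sum_ite_eq Finset.univ c (fun i => G i.castSucc)]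
  simp

lemma stdVec_li {m : ℕ} (j : Fin (m + 2)) :
    LinearIndependent ℝ (fun i : {i : Fin (m + 2) // i ≠ j} => stdVec m i.1) := by
  rw [Fintype.linearIndependent_iff]
  intro g hg i
  classical
  set G : Fin (m + 2) → ℝ := fun i => if h : i = j then 0 else g ⟨i, h⟩ with hGdef
  have hGj : G j = 0 := by simp [hGdef]
  have hGsub : ∀ i : {i : Fin (m + 2) // i ≠ j}, G i.1 = g i := by
    intro i; simp [hGdef, i.2]
  have hsum : ∑ i, G i • stdVec m i = 0 := by
    rw [← Finset.sum_subset (Finset.subset_univ ({j}ᶜ : Finset (Fin (m + 2))))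
      (fun x _ hx => by
        have : x = j := by simpa using hx
        simp [this, hGj])]
    rw [Finset.sum_subtype (s := ({j}ᶜ : Finset (Fin (m+2)))) (p := fun i => i ≠ j) (by simp) (f := fun i => G i • stdVec m i)]
    rw [← hg]
    exact Finset.sum_congr rfl (fun i _ => by rw [hGsub])
  have heval : ∀ c : Fin (m + 1), G c.castSucc + G (Fin.last (m + 1)) = 0 := by
    intro c
    have := congrFun hsum c
    rwa [sum_stdVec_apply] at this
  have hlast : G (Fin.last (m + 1)) = 0 := by
    by_cases hj : j = Fin.last (m + 1)
    · rw [← hj, hGj]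
    · have := heval (j.castPred hj)
      rw [Fin.castSucc_castPred, hGj, zero_add] at this
      exact this
  have hall : ∀ i, G i = 0 := by
    intro i
    induction i using Fin.lastCases with
    | last => exact hlast
    | cast c => have := heval c; rwa [hlast, add_zero] at this
  rw [← hGsub i, hall]

lemma isProjFrame_stdFrame {m : ℕ} : IsProjFrame (stdFrame m) := by
  intro j
  choose u hu using fun i : Fin (m + 2) =>
    Projectivization.exists_smul_eq_mk_rep ℝ (stdVec m i) (stdVec_ne_zero i)
  have h := (stdVec_li (m := m) j).units_smul (fun i => u i.1)
  convert h using 1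
  funext i
  rw [stdFrame_eq, ← hu i.1]
  rfl

lemma projMap_eq_on_stdFrame {m : ℕ} (g g' : (Fin (m + 1) → ℝ) ≃ₗ[ℝ] (Fin (m + 1) → ℝ))
    (h : ∀ j, projMap g (stdFrame m j) = projMap g' (stdFrame m j)) :
    ∀ x, projMap g x = projMap g' x := by
  classical
  have key : ∀ j, ∃ a : ℝˣ, a • g' (stdVec m j) = g (stdVec m j) := by
    intro j
    have := h j
    rw [stdFrame_eq, projMap_mk, projMap_mk] at this
    exact (Projectivization.mk_eq_mk_iff ℝ _ _ _ _).1 this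
  choose u hu using key
  set b : ℝˣ := u (Fin.last (m + 1)) with hb
  have hsingle : ∀ i : Fin (m + 1), stdVec m i.castSucc = Pi.single i 1 := by
    intro i; simp [stdVec]
  have hones : stdVec m (Fin.last (m + 1)) = fun _ => (1 : ℝ) := by simp [stdVec]
  have hsum1 : (fun _ => (1 : ℝ) : Fin (m + 1) → ℝ) = ∑ i, Pi.single i (1 : ℝ) := by
    rw [Finset.univ_sum_single (fun _ => (1 : ℝ) : Fin (m + 1) → ℝ)]
  -- all the units agree
  have hib : ∀ i : Fin (m + 1), u i.castSucc = b := by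
    have e1 : g (fun _ => (1 : ℝ)) = ∑ i, (u i.castSucc : ℝ) • g' (Pi.single i 1) := by
      rw [hsum1, map_sum]
      refine Finset.sum_congr rfl (fun i _ => ?_)
      rw [← hsingle i, ← hu i.castSucc, hsingle i]
      rfl
    have e2 : g (fun _ => (1 : ℝ)) = ∑ i, (b : ℝ) • g' (Pi.single i 1) := by
      rw [← hones, ← hu (Fin.last (m + 1)), hones, hsum1, map_sum, Finset.smul_sum]
      rfl
    have e3 : ∑ i, ((u i.castSucc : ℝ) - (b : ℝ)) • g' (Pi.single i 1) = 0 := by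
      simp only [sub_smul, Finset.sum_sub_distrib, ← e1, ← e2, sub_self]
    have li : LinearIndependent ℝ (fun i : Fin (m + 1) => g' (Pi.single i 1)) := by
      have := (Pi.basisFun ℝ (Fin (m + 1))).linearIndependent.map' g'.toLinearMap g'.ker
      convert this using 1
      funext i
      simp [Function.comp]
      all_goals rfl
    intro i
    have := Fintype.linearIndependent_iff.1 li _ e3 i
    exact Units.ext (sub_eq_zero.1 this)
  -- hence g = b • g'
  have hgv : ∀ v, g v = (b : ℝ) • g' v := by
    have : g.toLinearMap = (b : ℝ) • g'.toLinearMap := by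
      apply (Pi.basisFun ℝ (Fin (m + 1))).ext
      intro i
      simp only [Pi.basisFun_apply, LinearMap.smul_apply]
      rw [← hsingle i]
      show g (stdVec m i.castSucc) = (b : ℝ) • g' (stdVec m i.castSucc)
      rw [← hu i.castSucc, hib i]
      rfl
    intro v
    have := congrFun (congrArg (fun (L : _ →ₗ[ℝ] _) => (L : (Fin (m+1) → ℝ) → _)) this) v
    simpa using this
  intro x
  induction x using Projectivization.ind with
  | h v hv =>
    rw [projMap_mk, projMap_mk]
    rw [Projectivization.mk_eq_mk_iff]
    exact ⟨b, (hgv v).symm⟩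

lemma exists_lift {m : ℕ} (p : Fin (m + 2) → Projectivization ℝ (Fin (m + 1) → ℝ))
    (hp : IsProjFrame p) :
    ∃ g : (Fin (m + 1) → ℝ) ≃ₗ[ℝ] (Fin (m + 1) → ℝ),
      ∀ j, projMap g (stdFrame m j) = p j := by
  classical
  set b : Fin (m + 1) → (Fin (m + 1) → ℝ) := fun i => (p i.castSucc).rep with hbdef
  have li_b : LinearIndependent ℝ b := by
    have := (hp (Fin.last (m + 1))).comp
      (fun i : Fin (m + 1) => (⟨i.castSucc, (Fin.castSucc_lt_last i).ne⟩ :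
        {i : Fin (m + 2) // i ≠ Fin.last (m + 1)}))
      (fun a c hac => by
        have : a.castSucc = c.castSucc := congrArg Subtype.val hac
        exact Fin.castSucc_injective _ this)
    exact this
  have hcard : Fintype.card (Fin (m + 1)) = Module.finrank ℝ (Fin (m + 1) → ℝ) := by
    simp [Module.finrank_fintype_fun_eq_card]
  set B := basisOfLinearIndependentOfCardEqFinrank li_b hcard with hBdef
  have hB : ⇑B = b := coe_basisOfLinearIndependentOfCardEqFinrank li_b hcard
  set c : Fin (m + 1) → ℝ := fun i => B.repr (p (Fin.last (m + 1))).rep i with hcdef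
  have hsum : ∑ i, c i • b i = (p (Fin.last (m + 1))).rep := by
    rw [← hB] at *
    exact B.sum_repr _
  have hc : ∀ i, c i ≠ 0 := by
    intro i0 h0
    have hne : (Fin.last (m + 1)) ≠ i0.castSucc := (Fin.castSucc_lt_last i0).ne'
    set x : {i : Fin (m + 2) // i ≠ i0.castSucc} := ⟨Fin.last (m + 1), hne⟩ with hx
    have hmem : (p (Fin.last (m + 1))).rep ∈ Submodule.span ℝ
        ((fun i : {i : Fin (m + 2) // i ≠ i0.castSucc} => (p i.1).rep) '' {y | y ≠ x}) := by
      rw [← hsum]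
      apply Submodule.sum_mem
      intro i _
      by_cases hi : i = i0
      · rw [hi, h0, zero_smul]; exact Submodule.zero_mem _
      · apply Submodule.smul_mem
        apply Submodule.subset_span
        refine ⟨⟨i.castSucc, by simp [Fin.castSucc_inj, hi]⟩, ?_, rfl⟩
        intro hcon
        have : i.castSucc = Fin.last (m + 1) := by
          have := congrArg Subtype.val hcon
          simpa [hx] using this
        exact (Fin.castSucc_lt_last i).ne this
    exact LinearIndependent.notMem_span_image (hp i0.castSucc) (x := x) (s := {y | y ≠ x}) (by simp) hmem
  set u : Fin (m + 1) → ℝˣ := fun i => Units.mk0 (c i) (hc i) with hudef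
  set B' := B.unitsSMul u with hB'def
  have hB' : ∀ i, B' i = c i • b i := by
    intro i
    rw [hB'def, Module.Basis.unitsSMul_apply, hB]
    rfl
  set g := (Pi.basisFun ℝ (Fin (m + 1))).equiv B' (Equiv.refl _) with hgdef
  have hg1 : ∀ i, g (Pi.single i 1) = c i • b i := by
    intro i
    rw [← hB' i, ← Pi.basisFun_apply, hgdef]
    exact Module.Basis.equiv_apply _ _ _ _
  have hg2 : g (fun _ => (1 : ℝ)) = (p (Fin.last (m + 1))).rep := by
    have : (fun _ => (1 : ℝ) : Fin (m + 1) → ℝ) = ∑ i, Pi.single i (1 : ℝ) :=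
      (Finset.univ_sum_single (fun _ => (1 : ℝ) : Fin (m + 1) → ℝ)).symm
    rw [this, map_sum]
    rw [Finset.sum_congr rfl (fun i _ => hg1 i)]
    exact hsum
  refine ⟨g, ?_⟩
  intro j
  rw [stdFrame_eq, projMap_mk, ← Projectivization.mk_rep (p j),
    Projectivization.mk_eq_mk_iff]
  induction j using Fin.lastCases with
  | last =>
    refine ⟨1, ?_⟩
    rw [one_smul]
    have hv : stdVec m (Fin.last (m + 1)) = fun _ => (1 : ℝ) := by simp [stdVec]
    rw [hv, hg2]
  | cast i =>
    refine ⟨u i, ?_⟩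
    have hv : stdVec m i.castSucc = Pi.single i 1 := by simp [stdVec]
    rw [hv, hg1 i]
    rfl

open scoped Classical in
noncomputable def gOf {m : ℕ} (p : Fin (m + 2) → Projectivization ℝ (Fin (m + 1) → ℝ)) :
    (Fin (m + 1) → ℝ) ≃ₗ[ℝ] (Fin (m + 1) → ℝ) :=
  if h : IsProjFrame p then (exists_lift p h).choose else LinearEquiv.refl ℝ _

lemma gOf_spec {m : ℕ} {p : Fin (m + 2) → Projectivization ℝ (Fin (m + 1) → ℝ)}
    (h : IsProjFrame p) : ∀ j, projMap (gOf p) (stdFrame m j) = p j := by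
  rw [gOf]
  rw [dif_pos h]
  exact (exists_lift p h).choose_spec


/-- The map sending the `PGL(m)`-orbit of a configuration `(p₁, …, p_k)` (whose
first `m+2` points form a projective frame) to the projective coordinates
`(p_{m+3}^π, …, p_k^π)` with respect to the frame `π = (p₁, …, p_{m+2})` is a
well-defined bijection from `PΣ_m^k = G(k,m)/PGL(m)` onto `(ℝP^m)^{k−m−2}`:
there is a coordinate map `F` (characterized by `α(F(p)_i) = p_{m+3+i}` for the
unique `α ∈ PGL(m)` taking the standard frame to `π`) which identifies two
configurations iff they lie in the same `PGL(m)`-orbit, and which is onto. -/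
theorem projective_shape_space_bijection (m k : ℕ) (hk : m + 2 < k) :
    ∃ F : (Fin k → Projectivization ℝ (Fin (m + 1) → ℝ)) →
          (Fin (k - (m + 2)) → Projectivization ℝ (Fin (m + 1) → ℝ)),
      (∀ p, IsProjFrame (fun j : Fin (m + 2) => p ⟨j.1, by omega⟩) →
        ∀ g : (Fin (m + 1) → ℝ) ≃ₗ[ℝ] (Fin (m + 1) → ℝ),
          (∀ j : Fin (m + 2), projMap g (stdFrame m j) = p ⟨j.1, by omega⟩) →
          ∀ i : Fin (k - (m + 2)), projMap g (F p i) = p ⟨m + 2 + i.1, by omega⟩) ∧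
      (∀ p q, IsProjFrame (fun j : Fin (m + 2) => p ⟨j.1, by omega⟩) →
        IsProjFrame (fun j : Fin (m + 2) => q ⟨j.1, by omega⟩) →
          (F p = F q ↔ ∃ g : (Fin (m + 1) → ℝ) ≃ₗ[ℝ] (Fin (m + 1) → ℝ),
            ∀ i : Fin k, projMap g (p i) = q i)) ∧
      (∀ z : Fin (k - (m + 2)) → Projectivization ℝ (Fin (m + 1) → ℝ),
        ∃ p, IsProjFrame (fun j : Fin (m + 2) => p ⟨j.1, by omega⟩) ∧ F p = z) := by
  classical
  set fr : (Fin k → Projectivization ℝ (Fin (m + 1) → ℝ)) →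
      (Fin (m + 2) → Projectivization ℝ (Fin (m + 1) → ℝ)) :=
    fun p j => p ⟨j.1, by omega⟩ with hfr
  refine ⟨fun p i => projMap (gOf (fr p)).symm (p ⟨m + 2 + i.1, by have := i.isLt; omega⟩),
    ?_, ?_, ?_⟩
  · -- property 1
    intro p hp g hg i
    have hp' : IsProjFrame (fr p) := hp
    have key := projMap_eq_on_stdFrame g (gOf (fr p))
      (fun j => by rw [hg j, gOf_spec hp' j])
    rw [key, projMap_symm_apply]
  · -- property 2
    intro p q hp hq
    have hp' : IsProjFrame (fr p) := hp
    have hq' : IsProjFrame (fr q) := hq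
    constructor
    · intro hFeq
      refine ⟨(gOf (fr p)).symm.trans (gOf (fr q)), ?_⟩
      intro i
      rw [projMap_trans]
      by_cases hi : i.1 < m + 2
      · have e1 : p i = fr p ⟨i.1, hi⟩ := by
          rw [hfr]
        have e2 : q i = fr q ⟨i.1, hi⟩ := by
          rw [hfr]
        rw [e1, ← gOf_spec hp' ⟨i.1, hi⟩, projMap_apply_symm, gOf_spec hq' ⟨i.1, hi⟩, e2]
      · have hlt : i.1 - (m + 2) < k - (m + 2) := by have := i.isLt; omega
        set i' : Fin (k - (m + 2)) := ⟨i.1 - (m + 2), hlt⟩ with hi'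
        have e1 : p i = p ⟨m + 2 + i'.1, by have := i.isLt; omega⟩ := by
          congr 1; exact Fin.ext (by simp [hi']; omega)
        have e2 : q i = q ⟨m + 2 + i'.1, by have := i.isLt; omega⟩ := by
          congr 1; exact Fin.ext (by simp [hi']; omega)
        rw [e1, e2]
        have h2 : projMap (gOf (fr p)).symm (p ⟨m + 2 + i'.1, by have := i'.isLt; omega⟩)
            = projMap (gOf (fr q)).symm (q ⟨m + 2 + i'.1, by have := i'.isLt; omega⟩) :=
          congrFun hFeq i'
        rw [h2, projMap_symm_apply]
    · intro ⟨g, hg⟩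
      funext i
      have hgf : ∀ j : Fin (m + 2),
          projMap ((gOf (fr p)).trans g) (stdFrame m j) = projMap (gOf (fr q)) (stdFrame m j) := by
        intro j
        rw [projMap_trans, gOf_spec hp' j, gOf_spec hq' j]
        exact hg ⟨j.1, by omega⟩
      have key := projMap_eq_on_stdFrame _ _ hgf
      -- projMap of symms agree
      have keysymm : ∀ x, projMap ((gOf (fr p)).trans g).symm x = projMap (gOf (fr q)).symm x := by
        intro x
        have h1 : projMap ((gOf (fr p)).trans g)
            (projMap ((gOf (fr p)).trans g).symm x) = x := projMap_symm_apply _ _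
        rw [key] at h1
        have := congrArg (projMap (gOf (fr q)).symm) h1
        rwa [projMap_apply_symm] at this
      have hq2 : projMap g.symm (q ⟨m + 2 + i.1, by have := i.isLt; omega⟩)
          = p ⟨m + 2 + i.1, by have := i.isLt; omega⟩ := by
        rw [← hg ⟨m + 2 + i.1, by have := i.isLt; omega⟩, projMap_apply_symm]
      show projMap (gOf (fr p)).symm (p ⟨m + 2 + i.1, by have := i.isLt; omega⟩)
          = projMap (gOf (fr q)).symm (q ⟨m + 2 + i.1, by have := i.isLt; omega⟩)
      rw [← keysymm]
      have : ((gOf (fr p)).trans g).symm = g.symm.trans (gOf (fr p)).symm := rfl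
      rw [this, projMap_trans, hq2]
  · -- surjectivity
    intro z
    set p : Fin k → Projectivization ℝ (Fin (m + 1) → ℝ) :=
      fun i => if h : i.1 < m + 2 then stdFrame m ⟨i.1, h⟩
        else z ⟨i.1 - (m + 2), by have := i.isLt; omega⟩ with hpdef
    have hfrp : fr p = stdFrame m := by
      funext j
      simp only [hfr, hpdef]
      rw [dif_pos j.isLt]
    have hp' : IsProjFrame (fr p) := by rw [hfrp]; exact isProjFrame_stdFrame
    refine ⟨p, hp', ?_⟩
    funext i
    show projMap (gOf (fr p)).symm (p ⟨m + 2 + i.1, by have := i.isLt; omega⟩) = z i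
    have hid : ∀ x, projMap (gOf (fr p)) x = x := by
      intro x
      have := projMap_eq_on_stdFrame (gOf (fr p)) (LinearEquiv.refl ℝ _)
        (fun j => by rw [gOf_spec hp' j, hfrp, projMap_refl]) x
      rwa [projMap_refl] at this
    have hids : ∀ x, projMap (gOf (fr p)).symm x = x := by
      intro x
      conv_lhs => rw [← hid x]
      exact projMap_apply_symm _ _
    rw [hids]
    simp only [hpdef]
    rw [dif_neg (by omega : ¬ (m + 2 + i.1 < m + 2))]
    congr 1
    exact Fin.ext (by simp)
end

section
/- Let Q be a probability distribution on ℝP^m (axes [X] with ‖X‖ = 1) and let Λ = E[XXᵀ]. If the largest eigenvalue of Λ is simple with unit eigenvector γ, then the extrinsic mean of Q with respect to the embedding j([x]) = x xᵀ exists and equals [γ]; i.e., [γ] is the unique minimizer over [y] ∈ ℝP^m of E[‖XXᵀ − y yᵀ‖²]. -/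
open Matrix MeasureTheory

lemma euclid_inner_eq' {n : ℕ} (x z : EuclideanSpace ℝ (Fin n)) :
    (inner ℝ x z : ℝ) = (⇑x) ⬝ᵥ (⇑z) := by
  simp [EuclideanSpace.inner_eq_star_dotProduct, dotProduct]
  exact Finset.sum_congr rfl fun _ _ => mul_comm _ _

lemma trace_chordal {n : ℕ} (v y : Fin n → ℝ) :
    trace ((vecMulVec v v - vecMulVec y y) * (vecMulVec v v - vecMulVec y y)ᵀ) =
      (v ⬝ᵥ v)^2 - 2*(v ⬝ᵥ y)^2 + (y ⬝ᵥ y)^2 := by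
  have h : trace ((vecMulVec v v - vecMulVec y y) * (vecMulVec v v - vecMulVec y y)ᵀ)
      = ∑ i, ∑ j, (v i * v j - y i * y j) * (v i * v j - y i * y j) := by
    simp [trace, diag, mul_apply, vecMulVec_apply]
    exact Finset.sum_congr rfl fun i _ => Finset.sum_congr rfl fun j _ => by ring
  rw [h, pow_two, pow_two, pow_two, dotProduct, dotProduct, dotProduct,
    Finset.sum_mul_sum, Finset.sum_mul_sum, Finset.sum_mul_sum, Finset.mul_sum,
    ← Finset.sum_sub_distrib, ← Finset.sum_add_distrib]
  refine Finset.sum_congr rfl fun i _ => ?_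
  rw [Finset.mul_sum, ← Finset.sum_sub_distrib, ← Finset.sum_add_distrib]
  exact Finset.sum_congr rfl fun j _ => by ring

lemma rayleigh_bound' {n : ℕ} (Λ : Matrix (Fin n) (Fin n) ℝ) (hH : Λ.IsHermitian)
    (lamTop : ℝ)
    (hmax : ∀ (t : ℝ) (v : Fin n → ℝ), v ≠ 0 → Λ *ᵥ v = t • v → t ≤ lamTop)
    (y : Fin n → ℝ) (hy : y ⬝ᵥ y = 1) :
    y ⬝ᵥ (Λ *ᵥ y) ≤ lamTop ∧ (y ⬝ᵥ (Λ *ᵥ y) = lamTop → Λ *ᵥ y = lamTop • y) := by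
  classical
  set b := hH.eigenvectorBasis with hb
  set lam := hH.eigenvalues with hlam
  have hT : Λᵀ = Λ := by rw [← Λ.conjTranspose_eq_transpose_of_trivial]; exact hH
  set Y : EuclideanSpace ℝ (Fin n) := (WithLp.equiv 2 _).symm y with hY
  have hYc : ⇑Y = y := rfl
  set c : Fin n → ℝ := fun i => (⇑(b i)) ⬝ᵥ y with hc
  have hev : ∀ i, Λ *ᵥ ⇑(b i) = lam i • ⇑(b i) := fun i => hH.mulVec_eigenvectorBasis i
  have hle : ∀ i, lam i ≤ lamTop := by
    intro i
    refine hmax _ _ (fun h => b.orthonormal.ne_zero i ?_) (hev i)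
    exact (WithLp.equiv 2 (Fin n → ℝ)).injective h
  have hpar : ∑ i, c i * c i = 1 := by
    have h := b.sum_inner_mul_inner Y Y
    rw [euclid_inner_eq' Y Y, hYc, hy] at h
    rw [← h]
    refine Finset.sum_congr rfl fun i _ => ?_
    simp only [euclid_inner_eq', hYc, hc]
    rw [dotProduct_comm y]
  have hray : y ⬝ᵥ (Λ *ᵥ y) = ∑ i, lam i * (c i * c i) := by
    set Z : EuclideanSpace ℝ (Fin n) := (WithLp.equiv 2 _).symm (Λ *ᵥ y) with hZ
    have hZc : ⇑Z = Λ *ᵥ y := rfl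
    have h := b.sum_inner_mul_inner Y Z
    rw [euclid_inner_eq' Y Z, hYc, hZc] at h
    rw [← h]
    refine Finset.sum_congr rfl fun i _ => ?_
    simp only [euclid_inner_eq', hYc, hZc, hc]
    have h2 : (⇑(b i)) ⬝ᵥ (Λ *ᵥ y) = (Λ *ᵥ ⇑(b i)) ⬝ᵥ y := by
      rw [Matrix.dotProduct_mulVec, ← Matrix.mulVec_transpose, hT]
    rw [h2, hev i, smul_dotProduct, dotProduct_comm y]
    simp only [smul_eq_mul]
    ring
  refine ⟨?_, ?_⟩
  · rw [hray]
    calc ∑ i, lam i * (c i * c i) ≤ ∑ i, lamTop * (c i * c i) :=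
          Finset.sum_le_sum fun i _ =>
            mul_le_mul_of_nonneg_right (hle i) (mul_self_nonneg _)
      _ = lamTop := by rw [← Finset.mul_sum, hpar, mul_one]
  · intro heq
    have hzero : ∑ i, (lamTop - lam i) * (c i * c i) = 0 := by
      have h1 : ∑ i, (lamTop - lam i) * (c i * c i)
          = lamTop * (∑ i, c i * c i) - ∑ i, lam i * (c i * c i) := by
        rw [Finset.mul_sum, ← Finset.sum_sub_distrib]
        exact Finset.sum_congr rfl fun i _ => by ring
      rw [h1, hpar, mul_one, ← hray, heq, sub_self]
    have hterm : ∀ i ∈ Finset.univ, (lamTop - lam i) * (c i * c i) = 0 :=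
      (Finset.sum_eq_zero_iff_of_nonneg fun i _ =>
        mul_nonneg (sub_nonneg.2 (hle i)) (mul_self_nonneg _)).1 hzero
    have hci : ∀ i, lam i * c i = lamTop * c i := by
      intro i
      rcases mul_eq_zero.1 (hterm i (Finset.mem_univ i)) with h | h
      · rw [sub_eq_zero.1 h]
      · rw [mul_self_eq_zero.1 h, mul_zero, mul_zero]
    have hyrep : ∑ i, c i • ⇑(b i) = y := by
      have h := congrArg (WithLp.linearEquiv 2 ℝ (Fin n → ℝ)) (b.sum_repr' Y)
      rw [map_sum] at h
      simp only [_root_.map_smul, WithLp.linearEquiv_apply, Equiv.apply_symm_apply] at h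
      have hYy : (WithLp.addEquiv 2 (Fin n → ℝ)).toFun Y = y := rfl
      rw [hYy] at h
      rw [← h]
      refine Finset.sum_congr rfl fun i _ => ?_
      rw [euclid_inner_eq' (b i) Y, hYc]
      rfl
    have hmv : Λ *ᵥ y = ∑ i, c i • (Λ *ᵥ ⇑(b i)) := by
      rw [← hyrep]
      rw [show Λ *ᵥ (∑ i, c i • ⇑(b i)) = ∑ i, Λ *ᵥ (c i • ⇑(b i)) from
        map_sum (Matrix.mulVecLin Λ) _ _]
      exact Finset.sum_congr rfl fun i _ => by rw [Matrix.mulVec_smul]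
    rw [hmv, ← hyrep, Finset.smul_sum]
    refine Finset.sum_congr rfl fun i _ => ?_
    rw [hev i, smul_smul, smul_smul, mul_comm (c i) (lam i), hci i, mul_comm lamTop (c i)]

/-- Extrinsic mean of an axial distribution: if `Q` is a probability distribution
on `ℝP^m` (unit-vector axes), `Λ = E[XXᵀ]`, and the largest eigenvalue `lamTop` of
`Λ` is simple with unit eigenvector `γ`, then the axis `[γ]` is the unique
minimizer over `[y] ∈ ℝP^m` of the expected squared chordal distance
`E‖XXᵀ − y yᵀ‖²` for the embedding `j([x]) = x xᵀ`. -/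
theorem extrinsic_mean_top_eigenvector (m : ℕ)
    (μ : Measure (Fin (m + 1) → ℝ)) [IsProbabilityMeasure μ]
    (hunit : ∀ᵐ v ∂μ, v ⬝ᵥ v = 1)
    (hint : ∀ i j, Integrable (fun v => v i * v j) μ)
    (Λ : Matrix (Fin (m + 1)) (Fin (m + 1)) ℝ)
    (hΛ : ∀ i j, Λ i j = ∫ v, v i * v j ∂μ)
    (lamTop : ℝ) (γ : Fin (m + 1) → ℝ) (hγ : γ ⬝ᵥ γ = 1)
    (heig : Λ *ᵥ γ = lamTop • γ)
    (hmax : ∀ (t : ℝ) (v : Fin (m + 1) → ℝ), v ≠ 0 → Λ *ᵥ v = t • v → t ≤ lamTop)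
    (hsimple : ∀ v : Fin (m + 1) → ℝ, Λ *ᵥ v = lamTop • v → ∃ c : ℝ, v = c • γ) :
    ∀ y : Fin (m + 1) → ℝ, y ⬝ᵥ y = 1 →
      (∫ v, trace ((vecMulVec v v - vecMulVec γ γ) * (vecMulVec v v - vecMulVec γ γ)ᵀ) ∂μ ≤
        ∫ v, trace ((vecMulVec v v - vecMulVec y y) * (vecMulVec v v - vecMulVec y y)ᵀ) ∂μ) ∧
      ((∫ v, trace ((vecMulVec v v - vecMulVec y y) * (vecMulVec v v - vecMulVec y y)ᵀ) ∂μ =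
          ∫ v, trace ((vecMulVec v v - vecMulVec γ γ) * (vecMulVec v v - vecMulVec γ γ)ᵀ) ∂μ) →
        y = γ ∨ y = -γ) := by
  have hH : Λ.IsHermitian := by
    rw [Matrix.IsHermitian, Λ.conjTranspose_eq_transpose_of_trivial]
    ext i j
    rw [transpose_apply, hΛ, hΛ]
    exact integral_congr_ae (Filter.Eventually.of_forall fun v => mul_comm _ _)
  have hform : ∀ z : Fin (m+1) → ℝ, z ⬝ᵥ z = 1 →
      ∫ v, trace ((vecMulVec v v - vecMulVec z z) * (vecMulVec v v - vecMulVec z z)ᵀ) ∂μ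
        = 2 - 2 * (z ⬝ᵥ (Λ *ᵥ z)) := by
    intro z hz
    have hfun : (fun v : Fin (m+1) → ℝ => (v ⬝ᵥ z)^2)
        = fun v => ∑ i, ∑ j, (z i * z j) * (v i * v j) := by
      funext v
      rw [pow_two, dotProduct, Finset.sum_mul_sum]
      refine Finset.sum_congr rfl fun i _ => Finset.sum_congr rfl fun j _ => by ring
    have hint2 : Integrable (fun v => (v ⬝ᵥ z)^2) μ := by
      rw [hfun]
      exact integrable_finset_sum _ fun i _ =>
        integrable_finset_sum _ fun j _ => (hint i j).const_mul _
    have hval2 : ∫ v, (v ⬝ᵥ z)^2 ∂μ = z ⬝ᵥ (Λ *ᵥ z) := by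
      rw [hfun, integral_finset_sum _ fun i _ =>
        integrable_finset_sum _ fun j _ => (hint i j).const_mul _]
      have : ∀ i : Fin (m+1), ∫ v, (∑ j, (z i * z j) * (v i * v j)) ∂μ
          = ∑ j, (z i * z j) * Λ i j := by
        intro i
        rw [integral_finset_sum _ fun j _ => (hint i j).const_mul _]
        exact Finset.sum_congr rfl fun j _ => by rw [integral_const_mul, hΛ]
      simp_rw [this]
      simp only [dotProduct, mulVec, dotProduct, Finset.mul_sum]
      exact Finset.sum_congr rfl fun i _ => Finset.sum_congr rfl fun j _ => by ring
    have hint1 : Integrable (fun v : Fin (m+1) → ℝ => (v ⬝ᵥ v)^2) μ := by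
      refine (integrable_const (1:ℝ)).congr ?_
      filter_upwards [hunit] with v hv
      rw [hv]; norm_num
    have hval1 : ∫ v, (v ⬝ᵥ v)^2 ∂μ = 1 := by
      have hcongr : (fun v : Fin (m+1) → ℝ => (v ⬝ᵥ v)^2) =ᵐ[μ] fun _ => (1:ℝ) := by
        filter_upwards [hunit] with v hv
        rw [hv]; norm_num
      rw [integral_congr_ae hcongr, integral_const]
      simp
    calc ∫ v, trace ((vecMulVec v v - vecMulVec z z) * (vecMulVec v v - vecMulVec z z)ᵀ) ∂μ
        = ∫ v, ((v ⬝ᵥ v)^2 - 2*(v ⬝ᵥ z)^2 + 1) ∂μ := by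
          refine integral_congr_ae (Filter.Eventually.of_forall fun v => ?_)
          simp only [trace_chordal, hz]; norm_num
      _ = (∫ v, ((v ⬝ᵥ v)^2 - 2*(v ⬝ᵥ z)^2) ∂μ) + ∫ _, (1:ℝ) ∂μ :=
          integral_add (hint1.sub (hint2.const_mul 2)) (integrable_const 1)
      _ = (∫ v, (v ⬝ᵥ v)^2 ∂μ) - (∫ v, 2*(v ⬝ᵥ z)^2 ∂μ) + ∫ _, (1:ℝ) ∂μ := by
          rw [integral_sub hint1 (hint2.const_mul 2)]
      _ = 2 - 2 * (z ⬝ᵥ (Λ *ᵥ z)) := by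
          rw [integral_const_mul, hval1, hval2, integral_const]
          simp; ring
  intro y hy
  have hRγ : γ ⬝ᵥ (Λ *ᵥ γ) = lamTop := by
    rw [heig, dotProduct_smul, smul_eq_mul, hγ, mul_one]
  have hr := rayleigh_bound' Λ hH lamTop hmax y hy
  constructor
  · rw [hform γ hγ, hform y hy, hRγ]
    linarith [hr.1]
  · intro he
    rw [hform γ hγ, hform y hy, hRγ] at he
    have hEq : y ⬝ᵥ (Λ *ᵥ y) = lamTop := by linarith
    obtain ⟨c, hcy⟩ := hsimple y (hr.2 hEq)
    have hc2 : c * c = 1 := by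
      have h := hy
      rw [hcy, smul_dotProduct, dotProduct_smul, hγ] at h
      simpa using h
    rcases mul_self_eq_one_iff.1 hc2 with h1 | h1
    · left; rw [hcy, h1, one_smul]
    · right; rw [hcy, h1, neg_one_smul]
end
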